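/- If p_A(t) = p_G(t) + R_z(χ_G(t)) e(t) where R_z is the rotation about the z-axis, p_G satisfies ẋ_G = v_G cos χ_G, ẏ_G = v_G sin χ_G, ż_G = 0, χ̇_G = v_G σ_G, and p_A satisfies ẋ_A = v_A cos χ_A cos γ_A, ẏ_A = v_A sin χ_A cos γ_A, ż_A = -v_A sin γ_A, then the error coordinates satisfy ė_x = v_A cos(χ_A - χ_G) cos γ_A - (1 - σ_G e_y) v_G, ė_y = v_A sin(χ_A - χ_G) cos γ_A - σ_G e_x v_G, and ė_z = -v_A sin γ_A. -/
import Mathlib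


/-- Error dynamics of the UAV position expressed in the UGV velocity frame. -/
theorem error_dynamics
    (xA yA zA xG yG zG ex ey ez χG χA γA vA vG σG : ℝ → ℝ) (t : ℝ)
    (hxAe : ∀ s, xA s = xG s + Real.cos (χG s) * ex s - Real.sin (χG s) * ey s)
    (hyAe : ∀ s, yA s = yG s + Real.sin (χG s) * ex s + Real.cos (χG s) * ey s)
    (hzAe : ∀ s, zA s = zG s + ez s)
    (hxG : HasDerivAt xG (vG t * Real.cos (χG t)) t)
    (hyG : HasDerivAt yG (vG t * Real.sin (χG t)) t)
    (hzG : HasDerivAt zG 0 t)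
    (hχG : HasDerivAt χG (vG t * σG t) t)
    (hxA : HasDerivAt xA (vA t * Real.cos (χA t) * Real.cos (γA t)) t)
    (hyA : HasDerivAt yA (vA t * Real.sin (χA t) * Real.cos (γA t)) t)
    (hzA : HasDerivAt zA (-(vA t * Real.sin (γA t))) t)
    (hex : DifferentiableAt ℝ ex t)
    (hey : DifferentiableAt ℝ ey t)
    (hez : DifferentiableAt ℝ ez t) :
    deriv ex t = vA t * Real.cos (χA t - χG t) * Real.cos (γA t)
        - (1 - σG t * ey t) * vG t ∧
    deriv ey t = vA t * Real.sin (χA t - χG t) * Real.cos (γA t)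
        - σG t * ex t * vG t ∧
    deriv ez t = -(vA t * Real.sin (γA t)) := by
  have pyth := Real.sin_sq_add_cos_sq (χG t)
  have hexf : ex = fun s => Real.cos (χG s) * (xA s - xG s) + Real.sin (χG s) * (yA s - yG s) := by
    funext s
    have h1 := hxAe s
    have h2 := hyAe s
    have p := Real.sin_sq_add_cos_sq (χG s)
    linear_combination (-(Real.cos (χG s))) * h1 + (-(Real.sin (χG s))) * h2 + (-(ex s)) * p
  have heyf : ey = fun s => -Real.sin (χG s) * (xA s - xG s) + Real.cos (χG s) * (yA s - yG s) := by
    funext s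
    have h1 := hxAe s
    have h2 := hyAe s
    have p := Real.sin_sq_add_cos_sq (χG s)
    linear_combination (Real.sin (χG s)) * h1 + (-(Real.cos (χG s))) * h2 + (-(ey s)) * p
  have hezf : ez = fun s => zA s - zG s := by
    funext s; have := hzAe s; linarith
  have e1 : xA t - xG t = Real.cos (χG t) * ex t - Real.sin (χG t) * ey t := by
    have := hxAe t; linarith
  have e2 : yA t - yG t = Real.sin (χG t) * ex t + Real.cos (χG t) * ey t := by
    have := hyAe t; linarith
  have hF : HasDerivAt
      (fun s => Real.cos (χG s) * (xA s - xG s) + Real.sin (χG s) * (yA s - yG s))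
      ((-Real.sin (χG t) * (vG t * σG t)) * (xA t - xG t)
        + Real.cos (χG t) * (vA t * Real.cos (χA t) * Real.cos (γA t) - vG t * Real.cos (χG t))
        + ((Real.cos (χG t) * (vG t * σG t)) * (yA t - yG t)
        + Real.sin (χG t) * (vA t * Real.sin (χA t) * Real.cos (γA t) - vG t * Real.sin (χG t)))) t :=
    (hχG.cos.mul (hxA.sub hxG)).add (hχG.sin.mul (hyA.sub hyG))
  have hG : HasDerivAt
      (fun s => -Real.sin (χG s) * (xA s - xG s) + Real.cos (χG s) * (yA s - yG s))
      ((-(Real.cos (χG t) * (vG t * σG t))) * (xA t - xG t)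
        + (-Real.sin (χG t)) * (vA t * Real.cos (χA t) * Real.cos (γA t) - vG t * Real.cos (χG t))
        + ((-Real.sin (χG t) * (vG t * σG t)) * (yA t - yG t)
        + Real.cos (χG t) * (vA t * Real.sin (χA t) * Real.cos (γA t) - vG t * Real.sin (χG t)))) t :=
    ((hχG.sin.neg).mul (hxA.sub hxG)).add (hχG.cos.mul (hyA.sub hyG))
  have hH : HasDerivAt (fun s => zA s - zG s) (-(vA t * Real.sin (γA t)) - 0) t := hzA.sub hzG
  refine ⟨?_, ?_, ?_⟩
  · rw [hexf, hF.deriv, e1, e2, Real.cos_sub]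
    linear_combination (vG t * σG t * ey t - vG t) * pyth
  · rw [heyf, hG.deriv, e1, e2, Real.sin_sub]
    linear_combination (-(vG t * σG t * ex t)) * pyth
  · rw [hezf, hH.deriv]; ring
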